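/- Suppose the system has a dichotomy on a splitting (L1,L2) with uniformity dimensions (j1,j2), and let k := dim L1. Then β̄_{k,j1} = sup_{U ∈ 𝒢_{j1}(L1)} β̄(U), i.e. the infimum over all k-dimensional subspaces L ⊆ ℝ^d of sup_{U∈𝒢_{j1}(L)} β̄(U) is attained at L = L1. -/
import Mathlib


open Set Filter Topology

noncomputable section

abbrev Euc (d : ℕ) := EuclideanSpace ℝ (Fin d)

/-- The solution `x(n, x₀)` of `x(n+1) = A(n) x(n)`, `x(0,x₀) = x₀`. -/
def sol {d : ℕ} (A : ℕ → (Euc d ≃L[ℝ] Euc d)) : ℕ → Euc d → Euc d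
  | 0, x => x
  | n + 1, x => A n (sol A n x)

/-- Boundedness of the coefficients `A(n)` and their inverses. -/
def BddSys {d : ℕ} (A : ℕ → (Euc d ≃L[ℝ] Euc d)) : Prop :=
  (∃ c : ℝ, ∀ n : ℕ, ‖(A n : Euc d →L[ℝ] Euc d)‖ ≤ c) ∧
  (∃ c : ℝ, ∀ n : ℕ, ‖((A n).symm : Euc d →L[ℝ] Euc d)‖ ≤ c)

/-- `D1(γ,U)` holds uniformly (constant `C`). -/
def D1u {d : ℕ} (A : ℕ → (Euc d ≃L[ℝ] Euc d)) (γ : ℝ) (U : Submodule ℝ (Euc d)) : Prop :=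
  ∃ C : ℝ, 0 < C ∧
    ∀ m n : ℕ, m ≤ n → ∀ x₀ ∈ U,
      ‖sol A n x₀‖ ≤ C * Real.exp (γ * ((n : ℝ) - (m : ℝ))) * ‖sol A m x₀‖

/-- `D2(γ,U)` holds uniformly (constant `C`). -/
def D2u {d : ℕ} (A : ℕ → (Euc d ≃L[ℝ] Euc d)) (γ : ℝ) (U : Submodule ℝ (Euc d)) : Prop :=
  ∃ C : ℝ, 0 < C ∧
    ∀ m n : ℕ, m ≤ n → ∀ x₀ ∈ U,
      C * Real.exp (γ * ((n : ℝ) - (m : ℝ))) * ‖sol A m x₀‖ ≤ ‖sol A n x₀‖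

/-- `𝒰` is a set of subspaces of `L` whose union is `L`. -/
def IsCover {d : ℕ} (𝒰 : Set (Submodule ℝ (Euc d))) (L : Submodule ℝ (Euc d)) : Prop :=
  (∀ U ∈ 𝒰, U ≤ L) ∧ (⋃ U ∈ 𝒰, (U : Set (Euc d))) = (L : Set (Euc d))

/-- `𝒢_j(L)` : the set of `j`-dimensional subspaces of `L`. -/
def Gr {d : ℕ} (j : ℕ) (L : Submodule ℝ (Euc d)) : Set (Submodule ℝ (Euc d)) :=
  {U | U ≤ L ∧ Module.finrank ℝ U = j}

/-- Upper Bohl exponent `β̄(U)` (with the convention `sSup ∅ = -∞` in `EReal`). -/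
def upperBohl {d : ℕ} (A : ℕ → (Euc d ≃L[ℝ] Euc d)) (U : Submodule ℝ (Euc d)) : EReal :=
  ⨅ N : ℕ, sSup {r : EReal | ∃ m n : ℕ, ∃ x₀ ∈ U, x₀ ≠ 0 ∧ N < n - m ∧
    r = ((((n : ℝ) - (m : ℝ))⁻¹ * Real.log (‖sol A n x₀‖ / ‖sol A m x₀‖) : ℝ) : EReal)}

/-- Limiting upper Bohl exponent `β̄_{k,j}`. -/
def upperBohlLim {d : ℕ} (A : ℕ → (Euc d ≃L[ℝ] Euc d)) (k j : ℕ) : EReal :=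
  ⨅ L ∈ {L : Submodule ℝ (Euc d) | Module.finrank ℝ L = k},
    ⨆ U ∈ Gr j L, upperBohl A U

/-- The system has a dichotomy on the splitting `(L1,L2)` with uniformity
dimensions `(j1,j2)`. -/
def DichotomyDim0 {d : ℕ} (A : ℕ → (Euc d ≃L[ℝ] Euc d))
    (L1 L2 : Submodule ℝ (Euc d)) (j1 j2 : ℕ) : Prop :=
  IsCompl L1 L2 ∧ IsCover (Gr j1 L1) L1 ∧ IsCover (Gr j2 L2) L2 ∧
  ∃ α : ℝ, 0 < α ∧ (∀ U ∈ Gr j1 L1, D1u A (-α) U) ∧ (∀ U ∈ Gr j2 L2, D2u A α U)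


/-! ### Auxiliary lemmas -/

lemma sol_add {d : ℕ} (A : ℕ → (Euc d ≃L[ℝ] Euc d)) (n : ℕ) (x y : Euc d) :
    sol A n (x + y) = sol A n x + sol A n y := by
  induction n with
  | zero => rfl
  | succ n ih => simp [sol, ih, map_add]

lemma sol_ne_zero {d : ℕ} (A : ℕ → (Euc d ≃L[ℝ] Euc d)) (n : ℕ) {x : Euc d} (hx : x ≠ 0) :
    sol A n x ≠ 0 := by
  induction n with
  | zero => exact hx
  | succ n ih => simpa [sol, (A n).map_eq_zero_iff] using ih

/-- Intermediate submodule of prescribed finrank. -/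
lemma exists_intermediate {d : ℕ} (L : Submodule ℝ (Euc d)) :
    ∀ n : ℕ, ∀ p : Submodule ℝ (Euc d), p ≤ L →
      Module.finrank ℝ p + n ≤ Module.finrank ℝ L →
      ∃ q : Submodule ℝ (Euc d), p ≤ q ∧ q ≤ L ∧
        Module.finrank ℝ q = Module.finrank ℝ p + n := by
  intro n
  induction n with
  | zero => exact fun p hp _ => ⟨p, le_rfl, hp, by simp⟩
  | succ n ih =>
    intro p hpL hle
    have hlt : Module.finrank ℝ p < Module.finrank ℝ L := by omega
    have hne : p ≠ L := fun h => absurd (h ▸ hlt) (lt_irrefl _)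
    obtain ⟨x, hxL, hxp⟩ := SetLike.exists_of_lt (lt_of_le_of_ne hpL hne)
    have hx0 : x ≠ 0 := fun h => hxp (h ▸ p.zero_mem)
    have hdisj : Disjoint p (Submodule.span ℝ {x}) :=
      (Submodule.disjoint_span_singleton' hx0).mpr hxp
    have hfr : Module.finrank ℝ ↥(p ⊔ Submodule.span ℝ {x}) =
        Module.finrank ℝ p + 1 := by
      have := Submodule.finrank_sup_add_finrank_inf_eq p (Submodule.span ℝ {x})
      rwa [hdisj.eq_bot, finrank_bot, add_zero, finrank_span_singleton hx0] at this
    have hsup_le : p ⊔ Submodule.span ℝ {x} ≤ L :=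
      sup_le hpL ((Submodule.span_singleton_le_iff_mem x L).mpr hxL)
    obtain ⟨q, h1, h2, h3⟩ := ih (p ⊔ Submodule.span ℝ {x}) hsup_le (by omega)
    exact ⟨q, le_trans le_sup_left h1, h2, by omega⟩

/-- `D1u γ U` implies `β̄(U) ≤ γ`. -/
lemma bohl_le_of_D1u {d : ℕ} (A : ℕ → (Euc d ≃L[ℝ] Euc d)) {γ : ℝ} {U : Submodule ℝ (Euc d)}
    (h : D1u A γ U) : upperBohl A U ≤ (γ : EReal) := by
  obtain ⟨C, hC, hb⟩ := h
  set M : ℝ := max 0 (Real.log C) with hM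
  have hM0 : 0 ≤ M := le_max_left _ _
  rw [← EReal.le_of_forall_lt_iff_le]
  intro z hz
  have hz' : γ < z := by exact_mod_cast hz
  set ε : ℝ := z - γ with hε
  have hεpos : 0 < ε := by simp [hε]; linarith
  obtain ⟨N, hN⟩ := exists_nat_gt (M / ε)
  have hMN : M / (N + 1 : ℝ) < ε := by
    rw [div_lt_iff₀ (by positivity)]
    have : M / ε < (N : ℝ) + 1 := lt_trans hN (by linarith)
    calc M = (M / ε) * ε := by field_simp
    _ < ((N:ℝ)+1) * ε := by exact mul_lt_mul_of_pos_right this hεpos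
    _ = ε * ((N:ℝ)+1) := mul_comm _ _
  refine le_trans (iInf_le _ N) (sSup_le ?_)
  rintro r ⟨m, n, x₀, hx₀U, hx₀, hmn, rfl⟩
  rw [EReal.coe_le_coe_iff]
  have hmlen : m ≤ n := by omega
  have hcast : (n : ℝ) - (m : ℝ) = ((n - m : ℕ) : ℝ) := by
    rw [Nat.cast_sub hmlen]
  have hp1 : ((N : ℝ) + 1) ≤ ((n - m : ℕ) : ℝ) := by exact_mod_cast hmn
  have hppos : (0:ℝ) < ((n - m : ℕ) : ℝ) := lt_of_lt_of_le (by positivity) hp1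
  have hsm : 0 < ‖sol A m x₀‖ := norm_pos_iff.mpr (sol_ne_zero A m hx₀)
  have hsn : 0 < ‖sol A n x₀‖ := norm_pos_iff.mpr (sol_ne_zero A n hx₀)
  have hratio : ‖sol A n x₀‖ / ‖sol A m x₀‖ ≤ C * Real.exp (γ * ((n:ℝ) - m)) := by
    rw [div_le_iff₀ hsm]
    exact hb m n hmlen x₀ hx₀U
  have hlog : Real.log (‖sol A n x₀‖ / ‖sol A m x₀‖) ≤ Real.log C + γ * ((n:ℝ) - m) := by
    calc Real.log (‖sol A n x₀‖ / ‖sol A m x₀‖)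
        ≤ Real.log (C * Real.exp (γ * ((n:ℝ) - m))) :=
          Real.log_le_log (by positivity) hratio
      _ = Real.log C + γ * ((n:ℝ) - m) := by
          rw [Real.log_mul (ne_of_gt hC) (Real.exp_ne_zero _), Real.log_exp]
  rw [hcast]
  set p : ℝ := ((n - m : ℕ) : ℝ)
  have hlog' : Real.log (‖sol A n x₀‖ / ‖sol A m x₀‖) ≤ M + γ * p := by
    rw [hcast] at hlog
    have : Real.log C ≤ M := le_max_right _ _
    linarith
  calc p⁻¹ * Real.log (‖sol A n x₀‖ / ‖sol A m x₀‖)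
      ≤ p⁻¹ * (M + γ * p) := by
        exact mul_le_mul_of_nonneg_left hlog' (by positivity)
    _ = M / p + γ := by field_simp
    _ ≤ M / ((N:ℝ)+1) + γ := by
        have : M / p ≤ M / ((N:ℝ)+1) := by
          apply div_le_div_of_nonneg_left hM0 (by positivity) hp1
        linarith
    _ ≤ z := by linarith

/-- Lower bound on `β̄(U)` from exponential growth of a single solution. -/
lemma bohl_ge {d : ℕ} (A : ℕ → (Euc d ≃L[ℝ] Euc d)) {U : Submodule ℝ (Euc d)}
    {x₀ : Euc d} (hx₀U : x₀ ∈ U) (hx₀ : x₀ ≠ 0) {α c1 c2 : ℝ}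
    (hα : 0 < α) (hc2 : 0 < c2)
    (hb : ∀ n : ℕ, c2 * Real.exp (α * n) - c1 ≤ ‖sol A n x₀‖) :
    (α : EReal) ≤ upperBohl A U := by
  apply le_iInf
  intro N
  rw [← EReal.ge_of_forall_gt_iff_ge]
  intro z hz
  have hz' : z < α := by exact_mod_cast hz
  have hx0pos : 0 < ‖x₀‖ := norm_pos_iff.mpr hx₀
  have htend : Tendsto (fun n : ℕ => c1 * Real.exp (-α * n) + ‖x₀‖ * Real.exp ((z - α) * n))
      atTop (𝓝 0) := by
    have h1 : Tendsto (fun n : ℕ => Real.exp (-α * n)) atTop (𝓝 0) := by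
      apply Real.tendsto_exp_atBot.comp
      exact (tendsto_const_mul_atBot_of_neg (by linarith)).mpr tendsto_natCast_atTop_atTop
    have h2 : Tendsto (fun n : ℕ => Real.exp ((z - α) * n)) atTop (𝓝 0) := by
      apply Real.tendsto_exp_atBot.comp
      exact (tendsto_const_mul_atBot_of_neg (by linarith)).mpr tendsto_natCast_atTop_atTop
    have := ((h1.const_mul c1).add (h2.const_mul ‖x₀‖))
    simpa using this
  have hev : ∀ᶠ n : ℕ in atTop,
      c1 * Real.exp (-α * n) + ‖x₀‖ * Real.exp ((z - α) * n) < c2 :=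
    htend.eventually_lt_const hc2
  obtain ⟨n, hn1, hn2⟩ := (hev.and (eventually_gt_atTop N)).exists
  have hnpos : (0:ℝ) < (n:ℝ) := by exact_mod_cast (by omega : 0 < n)
  have hkey : Real.exp (z * n) * ‖x₀‖ ≤ ‖sol A n x₀‖ := by
    have hmul := mul_lt_mul_of_pos_right hn1 (Real.exp_pos (α * n))
    have e1 : Real.exp (-α * n) * Real.exp (α * n) = 1 := by
      rw [← Real.exp_add]; ring_nf; exact Real.exp_zero
    have e2 : Real.exp ((z - α) * n) * Real.exp (α * n) = Real.exp (z * n) := by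
      rw [← Real.exp_add]; ring_nf
    have hexp : (c1 * Real.exp (-α * n) + ‖x₀‖ * Real.exp ((z - α) * n)) * Real.exp (α * n)
        = c1 * (Real.exp (-α * n) * Real.exp (α * n))
          + ‖x₀‖ * (Real.exp ((z - α) * n) * Real.exp (α * n)) := by ring
    rw [hexp, e1, e2] at hmul
    have hb' := hb n
    linarith
  refine le_trans ?_ (le_sSup ⟨0, n, x₀, hx₀U, hx₀, by omega, rfl⟩)
  rw [EReal.coe_le_coe_iff]
  have hsol0 : sol A 0 x₀ = x₀ := rfl
  rw [hsol0]
  simp only [Nat.cast_zero, sub_zero]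
  have hratio : Real.exp (z * n) ≤ ‖sol A n x₀‖ / ‖x₀‖ := by
    rw [le_div_iff₀ hx0pos]; exact hkey
  have hlog : z * n ≤ Real.log (‖sol A n x₀‖ / ‖x₀‖) := by
    calc z * n = Real.log (Real.exp (z * n)) := (Real.log_exp _).symm
      _ ≤ _ := Real.log_le_log (Real.exp_pos _) hratio
  calc z = ((n:ℝ))⁻¹ * (z * n) := by field_simp
    _ ≤ ((n:ℝ))⁻¹ * Real.log (‖sol A n x₀‖ / ‖x₀‖) :=
        mul_le_mul_of_nonneg_left hlog (by positivity)

/-- **Limiting upper Bohl exponent in case of dichotomy:** the infimum defining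
`β̄_{k,j1}` is attained at the stable subspace `L1`. -/
theorem upperBohlLim_eq_of_dichotomy {d : ℕ} (hd : 1 ≤ d)
    (A : ℕ → (Euc d ≃L[ℝ] Euc d)) (hA : BddSys A)
    (L1 L2 : Submodule ℝ (Euc d)) (j1 j2 : ℕ)
    (h : DichotomyDim0 A L1 L2 j1 j2) :
    upperBohlLim A (Module.finrank ℝ L1) j1 = ⨆ U ∈ Gr j1 L1, upperBohl A U := by
  unfold upperBohlLim
  obtain ⟨hcompl, hcov1, hcov2, α, hα, hD1, hD2⟩ := h
  apply le_antisymm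
  · exact iInf₂_le L1 (show Module.finrank ℝ L1 = Module.finrank ℝ L1 from rfl)
  · apply le_iInf₂
    intro L hL
    have hLrank : Module.finrank ℝ L = Module.finrank ℝ L1 := hL
    by_cases hsub : L ≤ L1
    · rw [Submodule.eq_of_le_of_finrank_eq hsub hLrank]
    · obtain ⟨x₀, hx₀L, hx₀L1⟩ := SetLike.not_le_iff_exists.mp hsub
      clear hsub
      have hx₀ne : x₀ ≠ 0 := fun h => hx₀L1 (h ▸ L1.zero_mem)
      have hx₀top : x₀ ∈ L1 ⊔ L2 := by rw [hcompl.sup_eq_top]; trivial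
      obtain ⟨u, hu, w, hw, huw⟩ := Submodule.mem_sup.mp hx₀top
      have hwne : w ≠ 0 := by
        rintro rfl
        exact hx₀L1 (by rw [← huw]; simpa using hu)
      -- membership in the covers
      have hu' : u ∈ ⋃ U ∈ Gr j1 L1, (U : Set (Euc d)) := by rw [hcov1.2]; exact hu
      obtain ⟨U', hU', huU'⟩ := Set.mem_iUnion₂.mp hu'
      have hw' : w ∈ ⋃ V ∈ Gr j2 L2, (V : Set (Euc d)) := by rw [hcov2.2]; exact hw
      obtain ⟨V, hV, hwV⟩ := Set.mem_iUnion₂.mp hw'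
      obtain ⟨C1, hC1, hb1⟩ := hD1 U' hU'
      obtain ⟨C2, hC2, hb2⟩ := hD2 V hV
      -- 1 ≤ j1
      have hj1pos : 0 < j1 := by
        rcases Nat.eq_zero_or_pos j1 with hj0 | h
        · exfalso
          have hL1bot : L1 = ⊥ := by
            rw [eq_bot_iff]
            intro y hy
            have hy' : y ∈ ⋃ W ∈ Gr j1 L1, (W : Set (Euc d)) := by rw [hcov1.2]; exact hy
            obtain ⟨W, hW, hyW⟩ := Set.mem_iUnion₂.mp hy'
            have : W = ⊥ := Submodule.finrank_eq_zero.mp (hj0 ▸ hW.2)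
            rw [this] at hyW
            exact hyW
          have : L = ⊥ := Submodule.finrank_eq_zero.mp (by rw [hLrank, hL1bot]; simp)
          exact hx₀ne (by simpa [this] using hx₀L)
        · exact h
      -- j1 ≤ finrank L
      have hj1le : j1 ≤ Module.finrank ℝ L := by
        rw [hLrank, ← hU'.2]
        exact Submodule.finrank_mono hU'.1
      -- construct a j1-dimensional subspace U of L containing x₀
      have hspanle : Submodule.span ℝ {x₀} ≤ L :=
        (Submodule.span_singleton_le_iff_mem x₀ L).mpr hx₀L
      have hspanrank : Module.finrank ℝ (Submodule.span ℝ {x₀}) = 1 :=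
        finrank_span_singleton hx₀ne
      obtain ⟨U, hspanU, hUL, hUrank⟩ :=
        exists_intermediate L (j1 - 1) (Submodule.span ℝ {x₀}) hspanle
          (by rw [hspanrank]; omega)
      have hUGr : U ∈ Gr j1 L := ⟨hUL, by rw [hUrank, hspanrank]; omega⟩
      have hx₀U : x₀ ∈ U := hspanU (Submodule.mem_span_singleton_self x₀)
      -- growth estimate for the solution through x₀
      have hb : ∀ n : ℕ, (C2 * ‖w‖) * Real.exp (α * n) - C1 * ‖u‖ ≤ ‖sol A n x₀‖ := by
        intro n
        have h2 := hb2 0 n (Nat.zero_le n) w hwV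
        have h1 := hb1 0 n (Nat.zero_le n) u huU'
        simp only [Nat.cast_zero, sub_zero] at h1 h2
        have hsw : sol A 0 w = w := rfl
        have hsu : sol A 0 u = u := rfl
        rw [hsw] at h2
        rw [hsu] at h1
        have hd : sol A n x₀ = sol A n u + sol A n w := by rw [← huw, sol_add]
        have htri : ‖sol A n w‖ - ‖sol A n u‖ ≤ ‖sol A n x₀‖ := by
          have := norm_sub_le (sol A n u + sol A n w) (sol A n u)
          rw [add_sub_cancel_left] at this
          rw [hd]
          linarith
        have hexp1 : Real.exp (-α * n) ≤ 1 := by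
          rw [Real.exp_le_one_iff]
          have : (0:ℝ) ≤ (n:ℝ) := Nat.cast_nonneg n
          nlinarith
        have h1' : ‖sol A n u‖ ≤ C1 * ‖u‖ := by
          have hmm := mul_le_mul_of_nonneg_left hexp1
            (mul_nonneg hC1.le (norm_nonneg u))
          nlinarith
        nlinarith
      have hge : (α : EReal) ≤ upperBohl A U :=
        bohl_ge A hx₀U hx₀ne hα (mul_pos hC2 (norm_pos_iff.mpr hwne)) hb
      calc ⨆ W ∈ Gr j1 L1, upperBohl A W
          ≤ ((-α : ℝ) : EReal) := iSup₂_le fun W hW => bohl_le_of_D1u A (hD1 W hW)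
        _ ≤ ((α : ℝ) : EReal) := by exact_mod_cast (by linarith : (-α:ℝ) ≤ α)
        _ ≤ upperBohl A U := hge
        _ ≤ ⨆ W ∈ Gr j1 L, upperBohl A W := le_biSup _ hUGr


end
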